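/- arXiv:1111.7247 — 2 statements merged into one kernel-verified Lean document; each statement's English description precedes it below -/
import Mathlib

section
/- Let A be an m×N real matrix satisfying the Restricted Isometry Property of order 2s with constant δ_{2s} < √2 − 1. Let f ∈ ℝ^N be arbitrary, let w ∈ ℝ^m satisfy ‖w‖₂ ≤ ε for some ε > 0, and set y = A f + w. Let f_s denote the best s-sparse approximation of f (obtained by keeping the s largest-magnitude entries of f and setting the others to zero). Then any minimizer f̂ of ‖f‖₁ over the set {f ∈ ℝ^N : ‖y − A f‖₂ ≤ ε} satisfies ‖f − f̂‖₂ ≤ C₁ ε + C₂ ‖f − f_s‖₁ / √s, where C₁ and C₂ are constants depending only on s and δ_{2s} (not on N or m). -/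
/-!
Write `h = f - f̂` and cut the complement of `T` into blocks `T₁, T₂, …` of `s` indices in
decreasing order of `|h|`. Every entry of `h` on `T_{j+1}` is at most the average of `|h|` on `T_j`,
so `∑_{j ≥ 2} ‖h_{T_j}‖₂ ≤ ‖h_{Tᶜ}‖₁ / √s`, and `ℓ¹`-minimality of `f̂` gives the cone condition
`‖h_{Tᶜ}‖₁ ≤ ‖h_T‖₁ + 2 ‖f_{Tᶜ}‖₁`. On the other hand `‖A h‖₂ ≤ 2 ε` since `f` and `f̂` are both
feasible, and RIP together with restricted orthogonality (`|⟪A u, A v⟫| ≤ δ ‖u‖₂ ‖v‖₂` for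
disjointly supported `s`-sparse `u`, `v`) gives
`(1 - δ) ‖h_{T ∪ T₁}‖₂ ≤ √(1 + δ) ‖A h‖₂ + √2 δ ∑_{j ≥ 2} ‖h_{T_j}‖₂`.
For `δ < √2 - 1` these combine into a bound on `‖h_{T ∪ T₁}‖₂`, hence on `‖h‖₂`.
-/

open Finset

/-- `f` has at most `s` nonzero entries. -/
def IsSparse {N : Type*} [Fintype N] [DecidableEq N] (s : ℕ) (f : N → ℝ) : Prop :=
  ∃ T : Finset N, T.card ≤ s ∧ ∀ i ∉ T, f i = 0

/-- `A` satisfies the Restricted Isometry Property of order `s` with constant `δ`. -/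
def IsRIP {M N : Type*} [Fintype M] [Fintype N] [DecidableEq N]
    (A : Matrix M N ℝ) (s : ℕ) (δ : ℝ) : Prop :=
  ∀ f : N → ℝ, IsSparse s f →
    (1 - δ) * ∑ i, f i ^ 2 ≤ ∑ j, (A.mulVec f j) ^ 2 ∧
      ∑ j, (A.mulVec f j) ^ 2 ≤ (1 + δ) * ∑ i, f i ^ 2

open Matrix

local notation "‖" x "‖₂" => Real.sqrt (∑ i, x i ^ 2)

section EuclideanNorm

variable {ι : Type*} [Fintype ι]

lemma sqrt_sum_sq_eq_norm (x : ι → ℝ) : ‖x‖₂ = ‖(WithLp.toLp 2 x : EuclideanSpace ℝ ι)‖ := by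
  simp [EuclideanSpace.norm_eq]

lemma sqrt_sum_sq_sub_le (x y : ι → ℝ) : ‖x - y‖₂ ≤ ‖x‖₂ + ‖y‖₂ := by
  simpa only [sqrt_sum_sq_eq_norm, WithLp.toLp_sub] using norm_sub_le _ _

lemma sqrt_sum_sq_add_sum_le {κ : Type*} (x : ι → ℝ) (J : Finset κ) (t : κ → ι → ℝ) :
    ‖x + ∑ j ∈ J, t j‖₂ ≤ ‖x‖₂ + ∑ j ∈ J, ‖t j‖₂ := by
  simp only [sqrt_sum_sq_eq_norm, WithLp.toLp_add, WithLp.toLp_sum]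
  exact (norm_add_le _ _).trans (add_le_add_right (norm_sum_le _ _) _)

lemma sum_sq_smul_add_smul (p q : ι → ℝ) (c d : ℝ) :
    ∑ i, (c • p + d • q) i ^ 2
      = c ^ 2 * ∑ i, p i ^ 2 + 2 * c * d * (p ⬝ᵥ q) + d ^ 2 * ∑ i, q i ^ 2 := by
  simp only [dotProduct, mul_sum, ← sum_add_distrib]
  exact sum_congr rfl fun i _ => by simp only [Pi.add_apply, Pi.smul_apply, smul_eq_mul]; ring

end EuclideanNorm

lemma sum_abs_le_sqrt_card_mul_sqrt {ι : Type*} (T : Finset ι) (x : ι → ℝ) :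
    ∑ i ∈ T, |x i| ≤ √(#T) * √(∑ i ∈ T, x i ^ 2) := by
  simpa using Real.sum_mul_le_sqrt_mul_sqrt T (fun _ => 1) (fun i => |x i|)

lemma sqrt_add_sqrt_le_sqrt_two_mul {a b : ℝ} (ha : 0 ≤ a) (hb : 0 ≤ b) :
    √a + √b ≤ √2 * √(a + b) := by
  rw [← Real.sqrt_mul zero_le_two]
  apply Real.le_sqrt_of_sq_le
  nlinarith [sq_nonneg (√a - √b), Real.sq_sqrt ha, Real.sq_sqrt hb]

lemma one_sub_one_add_sqrt_two_mul_pos {δ : ℝ} (hδ : δ < √2 - 1) : 0 < 1 - (1 + √2) * δ := by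
  have h : (1 + √2) * (√2 - 1) = 1 := by
    ring_nf; rw [Real.sq_sqrt zero_le_two]; norm_num
  nlinarith [mul_lt_mul_of_pos_left hδ (by positivity : (0 : ℝ) < 1 + √2)]

section Indicator

variable {ι : Type*}

lemma sum_indicator_sq [Fintype ι] (T : Finset ι) (x : ι → ℝ) :
    ∑ i, (T : Set ι).indicator x i ^ 2 = ∑ i ∈ T, x i ^ 2 := by
  rw [← sum_indicator_subset (fun i => x i ^ 2) (subset_univ T)]
  refine sum_congr rfl fun i _ => ?_
  by_cases hi : i ∈ T <;> simp [hi]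

lemma indicator_mul_indicator_of_disjoint {U V : Finset ι} (hUV : Disjoint U V) (x : ι → ℝ)
    (i : ι) : (U : Set ι).indicator x i * (V : Set ι).indicator x i = 0 := by
  by_cases hi : i ∈ U
  · simp [Set.indicator_of_notMem (mem_coe.not.2 (disjoint_left.1 hUV hi))]
  · simp [Set.indicator_of_notMem (mem_coe.not.2 hi)]

end Indicator

section Sparse

variable {ι : Type*} [Fintype ι] [DecidableEq ι]

lemma IsSparse.add {s t : ℕ} {u v : ι → ℝ} (hu : IsSparse s u) (hv : IsSparse t v) :
    IsSparse (s + t) (u + v) := by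
  obtain ⟨U, hU, hu⟩ := hu
  obtain ⟨V, hV, hv⟩ := hv
  refine ⟨U ∪ V, (card_union_le U V).trans (add_le_add hU hV), fun i hi => ?_⟩
  rw [mem_union, not_or] at hi
  simp [hu i hi.1, hv i hi.2]

lemma IsSparse.smul {s : ℕ} {u : ι → ℝ} (hu : IsSparse s u) (c : ℝ) : IsSparse s (c • u) := by
  obtain ⟨U, hU, hu⟩ := hu
  exact ⟨U, hU, fun i hi => by simp [hu i hi]⟩

lemma isSparse_indicator {s : ℕ} {T : Finset ι} (hT : #T ≤ s) (x : ι → ℝ) :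
    IsSparse s ((T : Set ι).indicator x) :=
  ⟨T, hT, fun _ hi => Set.indicator_of_notMem (mem_coe.not.2 hi) x⟩

end Sparse

section RIP

variable {M N : Type*} [Fintype M] [Fintype N] [DecidableEq N] {A : Matrix M N ℝ} {s : ℕ}
  {δ : ℝ}

lemma IsRIP.mono {δ' : ℝ} (hA : IsRIP A s δ) (hδ : δ ≤ δ') : IsRIP A s δ' := by
  intro f hf
  have hf2 : 0 ≤ ∑ i, f i ^ 2 := sum_nonneg fun i _ => sq_nonneg _
  obtain ⟨hlow, hup⟩ := hA f hf
  constructor <;> nlinarith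

lemma IsRIP.sqrt_sum_sq_mulVec_le (hA : IsRIP A s δ) {x : N → ℝ} (hx : IsSparse s x) :
    ‖A *ᵥ x‖₂ ≤ √(1 + δ) * ‖x‖₂ := by
  rw [← Real.sqrt_mul' _ (sum_nonneg fun i _ => sq_nonneg _)]
  exact Real.sqrt_le_sqrt (hA x hx).2

theorem IsRIP.abs_dotProduct_mulVec_le (hA : IsRIP A (2 * s) δ) (hδ : 0 ≤ δ) {u v : N → ℝ}
    (hu : IsSparse s u) (hv : IsSparse s v) (huv : ∀ i, u i * v i = 0) :
    |(A *ᵥ u) ⬝ᵥ (A *ᵥ v)| ≤ δ * ‖u‖₂ * ‖v‖₂ := by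
  set a := ∑ i, u i ^ 2
  set b := ∑ i, v i ^ 2
  set X := (A *ᵥ u) ⬝ᵥ (A *ᵥ v)
  have horth : u ⬝ᵥ v = 0 := sum_eq_zero fun i _ => huv i
  -- Polarization: `c u ± v` are `2s`-sparse of squared norm `c² a + b`, and the squared norms of
  -- their images differ by `4 c X`. So the quadratic in `c` below is nonnegative, and its
  -- discriminant `4 X² - 4 δ² a b` is nonpositive.
  have hquad : ∀ c : ℝ, 0 ≤ (δ * a) * (c * c) + (-2 * X) * c + δ * b := by
    intro c
    have hsparse : ∀ d : ℝ, IsSparse (2 * s) (c • u + d • v) := fun d => by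
      rw [two_mul]; exact (hu.smul c).add (hv.smul d)
    have hplus := (hA _ (hsparse 1)).2
    have hminus := (hA _ (hsparse (-1))).1
    simp only [mulVec_add, mulVec_smul, sum_sq_smul_add_smul, horth] at hplus hminus
    nlinarith
  have hdisc := discrim_le_zero hquad
  rw [discrim] at hdisc
  apply abs_le_of_sq_le_sq _ (by positivity)
  rw [mul_pow, mul_pow, Real.sq_sqrt (sum_nonneg fun i _ => sq_nonneg _),
    Real.sq_sqrt (sum_nonneg fun i _ => sq_nonneg _)]
  nlinarith

lemma IsRIP.abs_dotProduct_mulVec_indicator_le (hA : IsRIP A (2 * s) δ) (hδ : 0 ≤ δ)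
    {U V : Finset N} (hU : #U ≤ s) (hV : #V ≤ s) (hUV : Disjoint U V) (x : N → ℝ) :
    |(A *ᵥ (U : Set N).indicator x) ⬝ᵥ (A *ᵥ (V : Set N).indicator x)|
      ≤ δ * √(∑ i ∈ U, x i ^ 2) * √(∑ i ∈ V, x i ^ 2) := by
  simpa only [sum_indicator_sq] using hA.abs_dotProduct_mulVec_le hδ (isSparse_indicator hU x)
    (isSparse_indicator hV x) (indicator_mul_indicator_of_disjoint hUV x)

lemma IsRIP.abs_dotProduct_mulVec_indicator_union_le (hA : IsRIP A (2 * s) δ) (hδ : 0 ≤ δ)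
    {U U' V : Finset N} (hU : #U ≤ s) (hU' : #U' ≤ s) (hV : #V ≤ s) (hUU' : Disjoint U U')
    (hUV : Disjoint U V) (hU'V : Disjoint U' V) (x : N → ℝ) :
    |(A *ᵥ (↑(U ∪ U') : Set N).indicator x) ⬝ᵥ (A *ᵥ (V : Set N).indicator x)|
      ≤ √2 * δ * √(∑ i ∈ U ∪ U', x i ^ 2) * √(∑ i ∈ V, x i ^ 2) := by
  have hsplit : (↑(U ∪ U') : Set N).indicator x
      = (U : Set N).indicator x + (U' : Set N).indicator x := by
    rw [coe_union, Set.indicator_union_of_disjoint (disjoint_coe.2 hUU')]; rfl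
  rw [hsplit, mulVec_add, add_dotProduct, sum_union hUU']
  calc _ ≤ δ * √(∑ i ∈ U, x i ^ 2) * √(∑ i ∈ V, x i ^ 2)
        + δ * √(∑ i ∈ U', x i ^ 2) * √(∑ i ∈ V, x i ^ 2) :=
        (abs_add_le _ _).trans (add_le_add (hA.abs_dotProduct_mulVec_indicator_le hδ hU hV hUV x)
          (hA.abs_dotProduct_mulVec_indicator_le hδ hU' hV hU'V x))
    _ = δ * (√(∑ i ∈ U, x i ^ 2) + √(∑ i ∈ U', x i ^ 2)) * √(∑ i ∈ V, x i ^ 2) := by ring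
    _ ≤ δ * (√2 * √(∑ i ∈ U, x i ^ 2 + ∑ i ∈ U', x i ^ 2)) * √(∑ i ∈ V, x i ^ 2) := by
        gcongr
        exact sqrt_add_sqrt_le_sqrt_two_mul (sum_nonneg fun _ _ => sq_nonneg _)
          (sum_nonneg fun _ _ => sq_nonneg _)
    _ = _ := by ring

end RIP

section Blocks

variable {ι : Type*}

lemma exists_antitone_enumeration (S : Finset ι) (φ : ι → ℝ) :
    ∃ e : Fin #S ↪ ι, univ.map e = S ∧ Antitone (φ ∘ e) := by
  obtain ⟨σ, hσ⟩ : ∃ σ : Equiv.Perm (Fin #S), Monotone ((fun k => -φ (S.equivFin.symm k)) ∘ σ) :=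
    ⟨_, Tuple.monotone_sort _⟩
  refine ⟨(σ.trans S.equivFin.symm).toEmbedding.trans (Function.Embedding.subtype (· ∈ S)), ?_,
    fun k k' hkk' => by simpa using hσ hkk'⟩
  ext i
  simp only [mem_map, mem_univ, true_and]
  exact ⟨fun ⟨k, hk⟩ => hk ▸ (S.equivFin.symm (σ k)).2,
    fun hi => ⟨σ.symm (S.equivFin ⟨i, hi⟩), by simp⟩⟩

variable [DecidableEq ι]

/-- `B 0, …, B L` is the paper's `T₁, T₂, …`: consecutive blocks of `s` elements of `S` in
decreasing order of `φ`, the last nonempty one possibly shorter. -/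
structure IsSortedBlockPartition (φ : ι → ℝ) (s : ℕ) (S : Finset ι) (L : ℕ) (B : ℕ → Finset ι) :
    Prop where
  pairwise_disjoint : Pairwise fun j k => Disjoint (B j) (B k)
  biUnion_eq : (range (L + 1)).biUnion B = S
  card_le : ∀ j, #(B j) ≤ s
  card_eq : ∀ j, (B (j + 1)).Nonempty → #(B j) = s
  le_of_mem_succ : ∀ j, ∀ i ∈ B (j + 1), ∀ i' ∈ B j, φ i ≤ φ i'

lemma exists_isSortedBlockPartition (φ : ι → ℝ) (S : Finset ι) {s : ℕ} (hs : 0 < s) :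
    ∃ L B, IsSortedBlockPartition φ s S L B := by
  obtain ⟨e, hS, hanti⟩ := exists_antitone_enumeration S φ
  -- Blocks are the images of the index intervals `[j s, (j + 1) s)` of the sorted enumeration.
  set F : ℕ → Finset (Fin #S) := fun j => univ.filter fun k => (k : ℕ) / s = j
  have hF : ∀ j (k : Fin #S), k ∈ F j ↔ j * s ≤ k ∧ (k : ℕ) < j * s + s := fun j k => by
    simp only [F, mem_filter, mem_univ, true_and, Nat.div_eq_iff hs]; omega
  have hF_card : ∀ j, #(F j) ≤ s := fun j => by
    simpa using card_le_card_of_injOn (t := Ico (j * s) (j * s + s)) Fin.val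
      (fun k hk => by simpa using (hF j k).1 hk) Fin.val_injective.injOn
  refine ⟨#S, fun j => (F j).map e, ⟨?_, ?_, fun j => by simpa using hF_card j, ?_, ?_⟩⟩
  · intro j j' hjj'
    simp only [disjoint_map, F]
    exact disjoint_filter.2 fun k _ hj hj' => hjj' (hj.symm.trans hj')
  · ext i
    conv_rhs => rw [← hS]
    simp only [mem_biUnion, mem_range, mem_map, F, mem_filter, mem_univ, true_and]
    exact ⟨fun ⟨_, _, k, _, hk⟩ => ⟨k, hk⟩, fun ⟨k, hk⟩ => ⟨(k : ℕ) / s,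
      Nat.lt_succ_of_le ((Nat.div_le_self _ _).trans k.2.le), k, rfl, hk⟩⟩
  · rintro j ⟨i, hi⟩
    obtain ⟨k, hk, -⟩ := mem_map.1 hi
    have hlast := (hF (j + 1) k).1 hk
    refine (card_map e).trans (le_antisymm (hF_card j) ?_)
    calc s = #(Ico (j * s) (j * s + s)) := by simp
      _ ≤ #((F j).map Fin.valEmbedding) := card_le_card fun m hm => by
          rw [mem_Ico] at hm
          exact mem_map.2 ⟨⟨m, by rw [add_one_mul] at hlast; omega⟩,
            (hF j _).2 hm, rfl⟩
      _ = #(F j) := card_map _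
  · intro j i hi i' hi'
    obtain ⟨k, hk, rfl⟩ := mem_map.1 hi
    obtain ⟨k', hk', rfl⟩ := mem_map.1 hi'
    have hk := (hF _ k).1 hk
    have hk' := (hF _ k').1 hk'
    rw [add_one_mul] at hk
    exact hanti (show k' ≤ k from Fin.le_iff_val_le_val.2 (by omega))

end Blocks

lemma sqrt_sum_sq_le_sum_abs_div_sqrt {ι : Type*} {B' B : Finset ι} {s : ℕ} (x : ι → ℝ)
    (hB' : #B' ≤ s) (hB : B'.Nonempty → #B = s) (hle : ∀ i ∈ B', ∀ i' ∈ B, |x i| ≤ |x i'|) :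
    √(∑ i ∈ B', x i ^ 2) ≤ (∑ i ∈ B, |x i|) / √s := by
  rcases B'.eq_empty_or_nonempty with rfl | hne
  · simp only [sum_empty, Real.sqrt_zero]
    positivity
  have hs : (0 : ℝ) < s := by exact_mod_cast hne.card_pos.trans_le hB'
  set m := ∑ i ∈ B, |x i|
  have havg : ∀ i ∈ B', |x i| ≤ m / s := fun i hi => by
    rw [le_div_iff₀ hs, ← hB hne, mul_comm, ← nsmul_eq_mul, ← sum_const]
    exact sum_le_sum fun i' hi' => hle i hi i' hi'
  have hsq : ∑ i ∈ B', x i ^ 2 ≤ m ^ 2 / s :=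
    calc ∑ i ∈ B', x i ^ 2 ≤ ∑ _i ∈ B', (m / s) ^ 2 :=
          sum_le_sum fun i hi => by
            simpa only [sq_abs] using pow_le_pow_left₀ (abs_nonneg _) (havg i hi) 2
      _ = #B' * (m / s) ^ 2 := by rw [sum_const, nsmul_eq_mul]
      _ ≤ s * (m / s) ^ 2 := by gcongr
      _ = m ^ 2 / s := by field_simp
  calc √(∑ i ∈ B', x i ^ 2) ≤ √(m ^ 2 / s) := Real.sqrt_le_sqrt hsq
    _ = m / √s := by
        rw [Real.sqrt_div (sq_nonneg m), Real.sqrt_sq (sum_nonneg fun _ _ => abs_nonneg _)]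

namespace IsSortedBlockPartition

variable {ι : Type*} [DecidableEq ι] {φ : ι → ℝ} {s L : ℕ} {S : Finset ι} {B : ℕ → Finset ι}

lemma subset (hB : IsSortedBlockPartition φ s S L B) {j : ℕ} (hj : j ≤ L) : B j ⊆ S :=
  hB.biUnion_eq ▸ subset_biUnion_of_mem B (mem_range.2 (Nat.lt_succ_of_le hj))

lemma sum_sqrt_sum_sq_le {x : ι → ℝ} (hB : IsSortedBlockPartition (fun i => |x i|) s S L B) :
    ∑ j ∈ range L, √(∑ i ∈ B (j + 1), x i ^ 2) ≤ (∑ i ∈ S, |x i|) / √s :=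
  calc ∑ j ∈ range L, √(∑ i ∈ B (j + 1), x i ^ 2)
      ≤ ∑ j ∈ range L, (∑ i ∈ B j, |x i|) / √s :=
        sum_le_sum fun j _ => sqrt_sum_sq_le_sum_abs_div_sqrt x (hB.card_le _) (hB.card_eq j)
          (hB.le_of_mem_succ j)
    _ ≤ ∑ j ∈ range (L + 1), (∑ i ∈ B j, |x i|) / √s :=
        sum_le_sum_of_subset_of_nonneg (range_subset_range.2 L.le_succ) fun _ _ _ => by positivity
    _ = (∑ i ∈ S, |x i|) / √s := by
        rw [← sum_div, ← hB.biUnion_eq, sum_biUnion fun j _ k _ hjk => hB.pairwise_disjoint hjk]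

lemma eq_indicator_add_sum [Fintype ι] {T : Finset ι} (hB : IsSortedBlockPartition φ s Tᶜ L B)
    (x : ι → ℝ) :
    x = (↑(T ∪ B 0) : Set ι).indicator x + ∑ j ∈ range L, (↑(B (j + 1)) : Set ι).indicator x := by
  have hblocks :
      (↑Tᶜ : Set ι).indicator x = ∑ j ∈ range (L + 1), (↑(B j) : Set ι).indicator x := by
    ext i
    rw [← hB.biUnion_eq, coe_biUnion, set_biUnion_coe, indicator_biUnion_apply, Finset.sum_apply]
    exact fun j _ k _ hjk => disjoint_coe.2 (hB.pairwise_disjoint hjk)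
  have hdisj : Disjoint (T : Set ι) (B 0 : Set ι) :=
    disjoint_coe.2 (disjoint_right.2 fun i hi => mem_compl.1 (hB.subset L.zero_le hi))
  rw [coe_union, Set.indicator_union_of_disjoint hdisj]
  calc x = (T : Set ι).indicator x + (↑Tᶜ : Set ι).indicator x := by
        rw [coe_compl, Set.indicator_self_add_compl]
    _ = _ := by
        rw [hblocks, sum_range_succ']
        ext i
        simp only [Pi.add_apply, Finset.sum_apply]
        ring

end IsSortedBlockPartition

lemma sum_compl_abs_sub_le {ι : Type*} [Fintype ι] [DecidableEq ι] (T : Finset ι) {f f' : ι → ℝ}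
    (hl1 : ∑ i, |f' i| ≤ ∑ i, |f i|) :
    ∑ i ∈ Tᶜ, |f i - f' i| ≤ ∑ i ∈ T, |f i - f' i| + 2 * ∑ i ∈ Tᶜ, |f i| := by
  have hT : ∑ i ∈ T, |f i| - ∑ i ∈ T, |f i - f' i| ≤ ∑ i ∈ T, |f' i| := by
    rw [← sum_sub_distrib]
    exact sum_le_sum fun i _ => by linarith [abs_sub_abs_le_abs_sub (f i) (f' i)]
  have hTc : ∑ i ∈ Tᶜ, |f i - f' i| - ∑ i ∈ Tᶜ, |f i| ≤ ∑ i ∈ Tᶜ, |f' i| := by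
    rw [← sum_sub_distrib]
    exact sum_le_sum fun i _ => by linarith [abs_sub (f i) (f' i)]
  rw [← sum_add_sum_compl T, ← sum_add_sum_compl T (fun i => |f i|)] at hl1
  linarith

section Recovery

variable {M N : Type*} [Fintype M] [Fintype N] [DecidableEq N] {A : Matrix M N ℝ} {s : ℕ}
  {δ : ℝ}

theorem IsRIP.one_sub_mul_sqrt_sum_sq_union_le (hA : IsRIP A (2 * s) δ) (hδ : 0 ≤ δ)
    {T : Finset N} (hT : #T ≤ s) {φ : N → ℝ} {L : ℕ} {B : ℕ → Finset N}
    (hB : IsSortedBlockPartition φ s Tᶜ L B) (x : N → ℝ) :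
    (1 - δ) * √(∑ i ∈ T ∪ B 0, x i ^ 2)
      ≤ √(1 + δ) * ‖A *ᵥ x‖₂ + √2 * δ * ∑ j ∈ range L, √(∑ i ∈ B (j + 1), x i ^ 2) := by
  set g := (↑(T ∪ B 0) : Set N).indicator x
  set t := fun j => (↑(B (j + 1)) : Set N).indicator x
  set G := ∑ i ∈ T ∪ B 0, x i ^ 2
  have hG : ∑ i, g i ^ 2 = G := sum_indicator_sq _ _
  have hg : IsSparse (2 * s) g :=
    isSparse_indicator ((card_union_le _ _).trans (by linarith [hB.card_le 0])) x
  have hdisj : ∀ j ≤ L, Disjoint T (B j) := fun j hj =>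
    disjoint_right.2 fun i hi => mem_compl.1 (hB.subset hj hi)
  have hcross : ∀ j ∈ range L, -((A *ᵥ g) ⬝ᵥ (A *ᵥ t j))
      ≤ √2 * δ * √G * √(∑ i ∈ B (j + 1), x i ^ 2) := fun j hj =>
    (neg_le_abs _).trans (hA.abs_dotProduct_mulVec_indicator_union_le hδ hT (hB.card_le 0)
      (hB.card_le _) (hdisj 0 L.zero_le) (hdisj _ (mem_range.1 hj))
      (hB.pairwise_disjoint (by omega)) x)
  have hAx : A *ᵥ x = A *ᵥ g + ∑ j ∈ range L, A *ᵥ t j := by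
    rw [← mulVec_sum, ← mulVec_add, ← hB.eq_indicator_add_sum]
  have hlow : (1 - δ) * G ≤ (A *ᵥ g) ⬝ᵥ (A *ᵥ g) := by
    rw [← hG]
    simpa only [dotProduct, sq] using (hA g hg).1
  have hup : ‖A *ᵥ g‖₂ ≤ √(1 + δ) * √G := hG ▸ hA.sqrt_sum_sq_mulVec_le hg
  have hmul : √G * ((1 - δ) * √G)
      ≤ √G * (√(1 + δ) * ‖A *ᵥ x‖₂ + √2 * δ * ∑ j ∈ range L, √(∑ i ∈ B (j + 1), x i ^ 2)) :=
    calc √G * ((1 - δ) * √G) = (1 - δ) * G := by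
          rw [mul_left_comm, Real.mul_self_sqrt (sum_nonneg fun _ _ => sq_nonneg _)]
      _ ≤ (A *ᵥ g) ⬝ᵥ (A *ᵥ x) + ∑ j ∈ range L, -((A *ᵥ g) ⬝ᵥ (A *ᵥ t j)) := by
          rw [hAx, dotProduct_add, dotProduct_sum, sum_neg_distrib]; linarith
      _ ≤ ‖A *ᵥ g‖₂ * ‖A *ᵥ x‖₂ + ∑ j ∈ range L, √2 * δ * √G * √(∑ i ∈ B (j + 1), x i ^ 2) :=
          add_le_add (Real.sum_mul_le_sqrt_mul_sqrt _ _ _) (sum_le_sum hcross)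
      _ ≤ √(1 + δ) * √G * ‖A *ᵥ x‖₂
            + ∑ j ∈ range L, √2 * δ * √G * √(∑ i ∈ B (j + 1), x i ^ 2) := by gcongr
      _ = _ := by
          rw [mul_add, mul_sum, mul_sum]
          congr 1 <;> [ring; exact sum_congr rfl fun _ _ => by ring]
  rcases (Real.sqrt_nonneg G).eq_or_lt with hG0 | hGpos
  · rw [← hG0, mul_zero]
    exact add_nonneg (by positivity)
      (mul_nonneg (mul_nonneg (by positivity) hδ) (sum_nonneg fun _ _ => by positivity))
  · exact le_of_mul_le_mul_left hmul hGpos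

theorem IsRIP.sqrt_sum_sq_sub_le_of_sum_abs_le (hA : IsRIP A (2 * s) δ) (hs : 0 < s)
    (hδ0 : 0 ≤ δ) (hδ : δ < √2 - 1) {T : Finset N} (hT : #T ≤ s) {f f' : N → ℝ}
    (hl1 : ∑ i, |f' i| ≤ ∑ i, |f i|) :
    ‖f - f'‖₂ ≤ 2 * √(1 + δ) / (1 - (1 + √2) * δ) * ‖A *ᵥ (f - f')‖₂
      + (4 * √2 * δ / (1 - (1 + √2) * δ) + 2) * (∑ i ∈ Tᶜ, |f i|) / √s := by
  set h := f - f'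
  obtain ⟨L, B, hB⟩ := exists_isSortedBlockPartition (fun i => |h i|) Tᶜ hs
  set X := √(∑ i ∈ T ∪ B 0, h i ^ 2)
  set tail := ∑ j ∈ range L, √(∑ i ∈ B (j + 1), h i ^ 2)
  set q := (∑ i ∈ Tᶜ, |f i|) / √s
  have hsqrt_s : 0 < √(s : ℝ) := Real.sqrt_pos.2 (by exact_mod_cast hs)
  have hunion := hA.one_sub_mul_sqrt_sum_sq_union_le hδ0 hT hB h
  have htail : tail ≤ X + 2 * q :=
    calc tail ≤ (∑ i ∈ Tᶜ, |h i|) / √s := hB.sum_sqrt_sum_sq_le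
      _ ≤ (∑ i ∈ T, |h i| + 2 * ∑ i ∈ Tᶜ, |f i|) / √s := by
          gcongr; exact sum_compl_abs_sub_le T hl1
      _ ≤ (√s * X + 2 * ∑ i ∈ Tᶜ, |f i|) / √s := by
          gcongr
          refine (sum_abs_le_sqrt_card_mul_sqrt T h).trans (mul_le_mul ?_ ?_ (by positivity)
            (by positivity))
          · exact Real.sqrt_le_sqrt (by exact_mod_cast hT)
          · exact Real.sqrt_le_sqrt (sum_le_sum_of_subset_of_nonneg subset_union_left
              fun _ _ _ => sq_nonneg _)
      _ = X + 2 * q := by rw [add_div, mul_div_cancel_left₀ _ hsqrt_s.ne', mul_div_assoc]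
  have hnorm : ‖h‖₂ ≤ X + tail := by
    conv_lhs => rw [hB.eq_indicator_add_sum h]
    simpa only [sum_indicator_sq] using
      sqrt_sum_sq_add_sum_le ((↑(T ∪ B 0) : Set N).indicator h) (range L)
        fun j => (↑(B (j + 1)) : Set N).indicator h
  have hβ := one_sub_one_add_sqrt_two_mul_pos hδ
  have hX : X ≤ (√(1 + δ) * ‖A *ᵥ h‖₂ + 2 * √2 * δ * q) / (1 - (1 + √2) * δ) := by
    rw [le_div_iff₀ hβ]
    nlinarith [mul_le_mul_of_nonneg_left htail (by positivity : 0 ≤ √2 * δ)]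
  calc ‖h‖₂ ≤ 2 * X + 2 * q := by linarith
    _ ≤ 2 * ((√(1 + δ) * ‖A *ᵥ h‖₂ + 2 * √2 * δ * q) / (1 - (1 + √2) * δ)) + 2 * q := by gcongr
    _ = _ := by simp only [q]; field_simp; ring

end Recovery

theorem sparse_recovery_with_RIP_general
    (s : ℕ) (hs : 1 ≤ s) (δ : ℝ) (hδ : δ < Real.sqrt 2 - 1) :
    ∃ C₁ C₂ : ℝ,
      ∀ (m N : ℕ) (A : Matrix (Fin m) (Fin N) ℝ),
        IsRIP A (2 * s) δ →
        ∀ (f : Fin N → ℝ) (w : Fin m → ℝ) (ε : ℝ), 0 < ε →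
          Real.sqrt (∑ j, w j ^ 2) ≤ ε →
          ∀ y : Fin m → ℝ, y = A.mulVec f + w →
          ∀ fs : Fin N → ℝ,
            (∃ T : Finset (Fin N), T.card = s ∧
              (∀ i ∈ T, ∀ j ∉ T, |f j| ≤ |f i|) ∧
              fs = fun i => if i ∈ T then f i else 0) →
          ∀ fhat : Fin N → ℝ,
            Real.sqrt (∑ j, (y j - A.mulVec fhat j) ^ 2) ≤ ε →
            (∀ g : Fin N → ℝ,
              Real.sqrt (∑ j, (y j - A.mulVec g j) ^ 2) ≤ ε →
              ∑ i, |fhat i| ≤ ∑ i, |g i|) →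
            Real.sqrt (∑ i, (f i - fhat i) ^ 2)
              ≤ C₁ * ε + C₂ * (∑ i, |f i - fs i|) / Real.sqrt s := by
  obtain ⟨δ', hδδ', hδ'0, hδ'⟩ : ∃ δ', δ ≤ δ' ∧ 0 ≤ δ' ∧ δ' < √2 - 1 :=
    ⟨max δ 0, le_max_left _ _, le_max_right _ _, max_lt hδ (sub_pos.2 Real.one_lt_sqrt_two)⟩
  refine ⟨4 * √(1 + δ') / (1 - (1 + √2) * δ'), 4 * √2 * δ' / (1 - (1 + √2) * δ') + 2, ?_⟩
  rintro m N A hA f w ε - hw y rfl fs ⟨T, hT, -, rfl⟩ fhat hfeas hmin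
  have hl1 : ∑ i, |fhat i| ≤ ∑ i, |f i| := hmin f (by simpa using hw)
  have htube : ‖A *ᵥ (f - fhat)‖₂ ≤ 2 * ε := by
    have : A *ᵥ (f - fhat) = (A *ᵥ f + w - A *ᵥ fhat) - w := by rw [mulVec_sub]; abel
    rw [this, two_mul]
    exact (sqrt_sum_sq_sub_le _ _).trans (add_le_add hfeas hw)
  have hfs : ∑ i, |f i - if i ∈ T then f i else 0| = ∑ i ∈ Tᶜ, |f i| := by
    rw [← sum_add_sum_compl T, sum_eq_zero fun i hi => by simp [hi], zero_add]
    exact sum_congr rfl fun i hi => by simp [mem_compl.1 hi]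
  have hβ := one_sub_one_add_sqrt_two_mul_pos hδ'
  rw [hfs]
  calc √(∑ i, (f i - fhat i) ^ 2) = ‖f - fhat‖₂ := rfl
    _ ≤ 2 * √(1 + δ') / (1 - (1 + √2) * δ') * ‖A *ᵥ (f - fhat)‖₂
          + (4 * √2 * δ' / (1 - (1 + √2) * δ') + 2) * (∑ i ∈ Tᶜ, |f i|) / √s :=
        (hA.mono hδδ').sqrt_sum_sq_sub_le_of_sum_abs_le hs hδ'0 hδ' hT.le hl1
    _ ≤ 2 * √(1 + δ') / (1 - (1 + √2) * δ') * (2 * ε)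
          + (4 * √2 * δ' / (1 - (1 + √2) * δ') + 2) * (∑ i ∈ Tᶜ, |f i|) / √s := by gcongr
    _ = _ := by ring

/-- Sparse recovery with RIP matrices.  If `A` satisfies `RIP(2s, δ)` with
`δ < √2 - 1`, `y = A f + w` with `‖w‖₂ ≤ ε`, and `f_s` is the best `s`-sparse approximation
of `f` (keeping the `s` largest-magnitude entries), then any `ℓ¹` minimizer `f̂` over
`{g : ‖y - A g‖₂ ≤ ε}` satisfies `‖f - f̂‖₂ ≤ C₁ ε + C₂ ‖f - f_s‖₁ / √s`, with constants
depending only on `s` and `δ`. -/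
theorem sparse_recovery_with_RIP
    (s : ℕ) (hs : 1 ≤ s) (δ : ℝ) (hδ0 : 0 < δ) (hδ : δ < Real.sqrt 2 - 1) :
    ∃ C₁ C₂ : ℝ,
      ∀ (m N : ℕ) (A : Matrix (Fin m) (Fin N) ℝ),
        IsRIP A (2 * s) δ →
        ∀ (f : Fin N → ℝ) (w : Fin m → ℝ) (ε : ℝ), 0 < ε →
          Real.sqrt (∑ j, w j ^ 2) ≤ ε →
          ∀ y : Fin m → ℝ, y = A.mulVec f + w →
          ∀ fs : Fin N → ℝ,
            (∃ T : Finset (Fin N), T.card = s ∧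
              (∀ i ∈ T, ∀ j ∉ T, |f j| ≤ |f i|) ∧
              fs = fun i => if i ∈ T then f i else 0) →
          ∀ fhat : Fin N → ℝ,
            Real.sqrt (∑ j, (y j - A.mulVec fhat j) ^ 2) ≤ ε →
            (∀ g : Fin N → ℝ,
              Real.sqrt (∑ j, (y j - A.mulVec g j) ^ 2) ≤ ε →
              ∑ i, |fhat i| ≤ ∑ i, |g i|) →
            Real.sqrt (∑ i, (f i - fhat i) ^ 2)
              ≤ C₁ * ε + C₂ * (∑ i, |f i - fs i|) / Real.sqrt s :=
  sparse_recovery_with_RIP_general s hs δ hδ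
end

section
/- There exist constants c₁, c₂ > 0 depending only on δ_s ∈ (0,1) such that the following holds. Let h be a random mask on an n₁×n₂ grid whose entries are i.i.d., equal to +√(d/n) with probability 1/2 and −√(d/n) with probability 1/2, and let A = D_sub R be the m×n spatial-domain CCA sensing matrix built from h. If m ≥ c₁ s² log n, then A satisfies RIP(s, δ_s) with probability at least 1 − 2n² exp(−c₂ m / s²). -/
/-!
If every mask entry is `±√(d/n)`, each column of the CCA matrix has unit norm, and for two
columns `k ≠ k'` the Gram entry is `(d/n) · S`, where `S = ∑_{x ∈ Λ} ε(x - k) ε(x - k')` is a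
sum of products of the normalised signs `ε` over the sampling lattice `Λ = d₁ℤ/n₁ × d₂ℤ/n₂`,
`|Λ| = m`. Each product is centred and `[-1, 1]`-valued, hence `1`-sub-Gaussian by Hoeffding's
lemma. The products are not independent, but a proper 3-colouring of the translation
`x ↦ x + (k - k')` of `Λ` splits `S` into three sums of products over pairwise disjoint pairs
of signs, each an independent sum. So `S` is `3m`-sub-Gaussian, and the Gram entry exceeds
`δ/s`, i.e. `|S| > δm/s`, with probability at most `2 exp(-δ² m / (6 s²))`. A union bound over
the `n²` pairs of columns and the estimate `|‖Af‖² - ‖f‖²| ≤ (δ/s) ‖f‖₁² ≤ δ ‖f‖²` for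
`s`-sparse `f` give the RIP with `c₂ = δ²/6`.
-/

open Finset MeasureTheory ProbabilityTheory

/-- The spatial-domain compressive coded aperture (CCA) sensing matrix built from a mask
`h` on an `n₁ × n₂` grid: 2D circular convolution with `h` followed by retaining one entry
per `d₁ × d₂` block (pointwise subsampling).  Written with 0-based indices,
`A (l₁,l₂) (k₁,k₂) = h (l₁ d₁ - k₁ mod n₁) (l₂ d₂ - k₂ mod n₂)`. -/
def ccaMatrix (n₁ n₂ d₁ d₂ : ℕ) (h : ZMod n₁ → ZMod n₂ → ℝ) :
    Matrix (Fin (n₁ / d₁) × Fin (n₂ / d₂)) (ZMod n₁ × ZMod n₂) ℝ :=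
  fun l k => h ((((l.1 : ℕ) * d₁ : ℕ) : ZMod n₁) - k.1) ((((l.2 : ℕ) * d₂ : ℕ) : ZMod n₂) - k.2)

open scoped ENNReal NNReal

section Coherence

variable {K : Type*} [Fintype K]

lemma IsSparse.sq_sum_abs_le [DecidableEq K] {s : ℕ} {f : K → ℝ} (hf : IsSparse s f) :
    (∑ k, |f k|) ^ 2 ≤ s * ∑ k, f k ^ 2 := by
  obtain ⟨T, hT, hzero⟩ := hf
  have hsupp : ∀ g : ℝ → ℝ, g 0 = 0 → ∑ k, g (f k) = ∑ k ∈ T, g (f k) := fun g hg =>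
    (Finset.sum_subset (Finset.subset_univ T) fun k _ hk => by rw [hzero k hk, hg]).symm
  rw [hsupp _ abs_zero, hsupp (· ^ 2) (by norm_num)]
  calc (∑ k ∈ T, |f k|) ^ 2 ≤ T.card * ∑ k ∈ T, |f k| ^ 2 := sq_sum_le_card_mul_sum_sq
    _ ≤ s * ∑ k ∈ T, f k ^ 2 := by
      simp only [sq_abs]
      gcongr

lemma abs_quadForm_sub_sum_sq_le [DecidableEq K] {G : K → K → ℝ} {η : ℝ} (hη : 0 ≤ η)
    (hdiag : ∀ k, G k k = 1) (hoff : ∀ k k', k ≠ k' → |G k k'| ≤ η) (f : K → ℝ) :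
    |∑ k, ∑ k', f k * f k' * G k k' - ∑ k, f k ^ 2| ≤ η * (∑ k, |f k|) ^ 2 := by
  have hsplit : ∑ k, ∑ k', f k * f k' * G k k' - ∑ k, f k ^ 2
      = ∑ k, ∑ k', f k * f k' * (G k k' - if k = k' then 1 else 0) := by
    simp only [mul_sub, Finset.sum_sub_distrib, mul_ite, mul_one, mul_zero,
      Finset.sum_ite_eq, Finset.mem_univ, if_true, sq]
  have hentry : ∀ k k', |G k k' - if k = k' then 1 else 0| ≤ η := by
    intro k k'
    by_cases h : k = k'
    · subst h; simp [hdiag, hη]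
    · simpa [h] using hoff k k' h
  rw [hsplit, sq, Finset.sum_mul_sum, Finset.mul_sum]
  refine (Finset.abs_sum_le_sum_abs _ _).trans (Finset.sum_le_sum fun k _ => ?_)
  rw [Finset.mul_sum]
  refine (Finset.abs_sum_le_sum_abs _ _).trans (Finset.sum_le_sum fun k' _ => ?_)
  rw [abs_mul, abs_mul, mul_comm η]
  exact mul_le_mul_of_nonneg_left (hentry k k') (by positivity)

lemma sum_mulVec_sq {M : Type*} [Fintype M] (A : Matrix M K ℝ) (f : K → ℝ) :
    ∑ j, (A.mulVec f j) ^ 2 = ∑ k, ∑ k', f k * f k' * (A.transpose * A) k k' := by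
  simp only [Matrix.mulVec, dotProduct, sq, Finset.sum_mul_sum, Matrix.mul_apply,
    Matrix.transpose_apply]
  rw [Finset.sum_comm]
  refine Finset.sum_congr rfl fun k _ => ?_
  rw [Finset.sum_comm]
  refine Finset.sum_congr rfl fun k' _ => ?_
  rw [Finset.mul_sum]
  exact Finset.sum_congr rfl fun j _ => by ring

theorem isRIP_of_gram [DecidableEq K] {M : Type*} [Fintype M] (A : Matrix M K ℝ) (s : ℕ)
    {δ : ℝ} (hδ : 0 ≤ δ) (hdiag : ∀ k, (A.transpose * A) k k = 1)
    (hoff : ∀ k k', k ≠ k' → |(A.transpose * A) k k'| ≤ δ / s) :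
    IsRIP A s δ := by
  intro f hf
  have hquad := abs_quadForm_sub_sum_sq_le (by positivity) hdiag hoff f
  have hsparse : δ / s * (∑ k, |f k|) ^ 2 ≤ δ * ∑ k, f k ^ 2 := by
    rcases Nat.eq_zero_or_pos s with rfl | hs
    · simp only [Nat.cast_zero, div_zero, zero_mul]
      exact mul_nonneg hδ (Finset.sum_nonneg fun k _ => sq_nonneg _)
    · calc δ / s * (∑ k, |f k|) ^ 2 ≤ δ / s * (s * ∑ k, f k ^ 2) := by
            gcongr; exact hf.sq_sum_abs_le
        _ = δ * ∑ k, f k ^ 2 := by field_simp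
  rw [sum_mulVec_sq]
  constructor <;> linarith [abs_le.1 (hquad.trans hsparse)]

end Coherence


namespace ProbabilityTheory.HasSubgaussianMGF

variable {Ω : Type*} {mΩ : MeasurableSpace Ω} {μ : Measure Ω} {X : Ω → ℝ} {c c' : ℝ≥0}

lemma mono (h : HasSubgaussianMGF X c μ) (hc : c ≤ c') : HasSubgaussianMGF X c' μ where
  integrable_exp_mul := h.integrable_exp_mul
  mgf_le t := (h.mgf_le t).trans <| Real.exp_le_exp.2 <| by gcongr

lemma finsetSum {ι : Type*} {X : ι → Ω → ℝ} {c : ι → ℝ≥0} [IsZeroOrProbabilityMeasure μ]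
    (s : Finset ι) (h : ∀ i ∈ s, HasSubgaussianMGF (X i) (c i) μ) :
    HasSubgaussianMGF (fun ω => ∑ i ∈ s, X i ω) ((∑ i ∈ s, (c i).sqrt) ^ 2) μ := by
  classical
  induction s using Finset.induction_on with
  | empty => simp
  | insert i s hi ih =>
    have := (h i (Finset.mem_insert_self i s)).add
      (ih fun j hj => h j (Finset.mem_insert_of_mem hj))
    simpa only [Finset.sum_insert hi, NNReal.sqrt_sq] using this

lemma measure_abs_ge_le [IsFiniteMeasure μ] (h : HasSubgaussianMGF X c μ) {ε : ℝ} (hε : 0 ≤ ε) :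
    μ {ω | ε ≤ |X ω|} ≤ ENNReal.ofReal (2 * Real.exp (-ε ^ 2 / (2 * c))) := by
  have hsub : {ω | ε ≤ |X ω|} ⊆ {ω | ε ≤ X ω} ∪ {ω | ε ≤ (-X) ω} := fun ω (hω : ε ≤ |X ω|) => by
    rcases le_abs'.1 hω with hneg | hpos
    · exact Or.inr (show ε ≤ -X ω by linarith)
    · exact Or.inl hpos
  calc μ {ω | ε ≤ |X ω|} ≤ μ {ω | ε ≤ X ω} + μ {ω | ε ≤ (-X) ω} :=
        (measure_mono hsub).trans (measure_union_le _ _)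
    _ = ENNReal.ofReal (μ.real {ω | ε ≤ X ω} + μ.real {ω | ε ≤ (-X) ω}) := by
        rw [ENNReal.ofReal_add measureReal_nonneg measureReal_nonneg, ofReal_measureReal,
          ofReal_measureReal]
    _ ≤ ENNReal.ofReal (2 * Real.exp (-ε ^ 2 / (2 * c))) := by
        gcongr
        linarith [h.measure_ge_le hε, h.neg.measure_ge_le hε]

end ProbabilityTheory.HasSubgaussianMGF


section PairProducts

variable {Ω : Type*} {mΩ : MeasurableSpace Ω} {μ : Measure Ω}

lemma hasSubgaussianMGF_mul_of_indepFun [IsProbabilityMeasure μ] {X Y : Ω → ℝ}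
    (hX : AEMeasurable X μ) (hY : AEMeasurable Y μ)
    (hXb : ∀ᵐ ω ∂μ, X ω ∈ Set.Icc (-1) 1) (hYb : ∀ᵐ ω ∂μ, Y ω ∈ Set.Icc (-1) 1)
    (hX0 : μ[X] = 0) (hXY : IndepFun X Y μ) :
    HasSubgaussianMGF (fun ω => X ω * Y ω) 1 μ := by
  have hb : ∀ᵐ ω ∂μ, X ω * Y ω ∈ Set.Icc (-1) 1 := by
    filter_upwards [hXb, hYb] with ω hx hy
    rw [Set.mem_Icc, ← abs_le] at hx hy ⊢
    rw [abs_mul]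
    exact mul_le_one₀ hx (abs_nonneg _) hy
  have h0 : μ[fun ω => X ω * Y ω] = 0 := by
    rw [hXY.integral_fun_mul_eq_mul_integral hX.aestronglyMeasurable hY.aestronglyMeasurable,
      hX0, zero_mul]
  have hc : ((‖(1 : ℝ) - -1‖₊ / 2) ^ 2 : ℝ≥0) = 1 := by
    rw [show (1 : ℝ) - -1 = 2 by norm_num]
    simp
  simpa only [hc] using
    hasSubgaussianMGF_of_mem_Icc_of_integral_eq_zero (X := fun ω => X ω * Y ω) (hX.mul hY) hb h0

variable {Γ J : Type*} [DecidableEq Γ] {ε : Γ → Ω → ℝ} {a b : J → Γ}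

lemma ProbabilityTheory.iIndepFun.indepFun_mul_finsetSum_mul (hmeas : ∀ v, Measurable (ε v))
    (hindep : iIndepFun ε μ) {x : J} {s : Finset J}
    (hdisj : ∀ y ∈ s, Disjoint ({a x, b x} : Finset Γ) {a y, b y}) :
    IndepFun (fun ω => ε (a x) ω * ε (b x) ω) (fun ω => ∑ y ∈ s, ε (a y) ω * ε (b y) ω) μ := by
  set P : Finset Γ := {a x, b x}
  set Q : Finset Γ := s.biUnion fun y => {a y, b y}
  have hP : a x ∈ P ∧ b x ∈ P := by simp [P]
  have hQ : ∀ y ∈ s, a y ∈ Q ∧ b y ∈ Q := fun y hy =>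
    ⟨Finset.mem_biUnion.2 ⟨y, hy, by simp⟩, Finset.mem_biUnion.2 ⟨y, hy, by simp⟩⟩
  have hφ : Measurable fun g : P → ℝ => g ⟨a x, hP.1⟩ * g ⟨b x, hP.2⟩ := by fun_prop
  have hψ : Measurable fun g : Q → ℝ =>
      ∑ y ∈ s.attach, g ⟨a y, (hQ y y.2).1⟩ * g ⟨b y, (hQ y y.2).2⟩ := by fun_prop
  have := (hindep.indepFun_finset P Q ((Finset.disjoint_biUnion_right _ _ _).2 hdisj)
    hmeas).comp hφ hψ
  convert this using 1
  exacts [rfl, funext fun ω => (Finset.sum_attach s fun y => ε (a y) ω * ε (b y) ω).symm]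

lemma hasSubgaussianMGF_sum_mul_of_pairwiseDisjoint
    (hmeas : ∀ v, Measurable (ε v)) (hindep : iIndepFun ε μ)
    (hbdd : ∀ v, ∀ᵐ ω ∂μ, ε v ω ∈ Set.Icc (-1) 1) (hmean : ∀ v, μ[ε v] = 0)
    {s : Finset J} (hab : ∀ x ∈ s, a x ≠ b x)
    (hdisj : (s : Set J).PairwiseDisjoint fun x => ({a x, b x} : Finset Γ)) :
    HasSubgaussianMGF (fun ω => ∑ x ∈ s, ε (a x) ω * ε (b x) ω) s.card μ := by
  have := hindep.isProbabilityMeasure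
  classical
  induction s using Finset.induction_on with
  | empty => simp
  | insert x s hx ih =>
    rw [Finset.coe_insert, Set.pairwiseDisjoint_insert_of_notMem (by exact_mod_cast hx)] at hdisj
    have hpair := hasSubgaussianMGF_mul_of_indepFun (hmeas (a x)).aemeasurable
      (hmeas (b x)).aemeasurable (hbdd _) (hbdd _) (hmean _)
      (hindep.indepFun (hab x (Finset.mem_insert_self x s)))
    have := hpair.add_of_indepFun (ih (fun y hy => hab y (Finset.mem_insert_of_mem hy)) hdisj.1)
      (hindep.indepFun_mul_finsetSum_mul hmeas hdisj.2)
    simpa only [Finset.sum_insert hx, Finset.card_insert_of_notMem hx, Nat.cast_succ,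
      add_comm (1 : ℝ≥0)] using this

end PairProducts

lemma ZMod.exists_coloring_add_one_ne {r : ℕ} (hr : 2 ≤ r) :
    ∃ c : ZMod r → Fin 3, ∀ v, c (v + 1) ≠ c v := by
  obtain ⟨k, rfl⟩ := Nat.exists_eq_add_of_le' hr
  -- `ZMod (k + 2)` is `Fin (k + 2)`, the vertex type of `cycleGraph (k + 2)`
  let c := SimpleGraph.cycleGraph.tricoloring (k + 2) hr
  exact ⟨c, fun v => c.valid (SimpleGraph.cycleGraph_adj.2 (Or.inl (add_sub_cancel_left v 1)))⟩

section Coloring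

variable {M : Type*} [AddCommGroup M]

lemma exists_zmod_addOrderOf_add_eq (τ : M) :
    ∃ p : M → ZMod (addOrderOf τ), ∀ x, p (x + τ) = p x + 1 := by
  -- `p x` is the discrete logarithm to the base `τ` of `x` minus a fixed representative of its
  -- coset of `⟨τ⟩`
  have hrep : ∀ x : M, ∃ j : ℤ, x = Quotient.out (x : M ⧸ AddSubgroup.zmultiples τ) + j • τ := by
    intro x
    obtain ⟨j, hj⟩ := AddSubgroup.mem_zmultiples_iff.1
      (QuotientAddGroup.eq.1 (QuotientAddGroup.out_eq' (x : M ⧸ AddSubgroup.zmultiples τ)))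
    exact ⟨j, by rw [hj]; abel⟩
  choose j hj using hrep
  refine ⟨fun x => j x, fun x => ?_⟩
  have hclass : ((x + τ : M) : M ⧸ AddSubgroup.zmultiples τ) = x :=
    QuotientAddGroup.eq.2 ⟨-1, by simp⟩
  have h := hj (x + τ)
  rw [hclass] at h
  have hzero : (j (x + τ) - j x - 1) • τ = 0 := by
    rw [sub_zsmul, sub_zsmul, one_zsmul]
    have := hj x
    linear_combination (norm := abel) this - h
  have := (ZMod.intCast_zmod_eq_zero_iff_dvd _ _).2 (addOrderOf_dvd_iff_zsmul_eq_zero.2 hzero)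
  push_cast at this
  linear_combination this

lemma exists_coloring_add_ne [Finite M] {τ : M} (hτ : τ ≠ 0) :
    ∃ c : M → Fin 3, ∀ x, c (x + τ) ≠ c x := by
  have hr : 2 ≤ addOrderOf τ := by
    have := (isOfFinAddOrder_of_finite τ).addOrderOf_pos
    have : addOrderOf τ ≠ 1 := fun h => hτ (AddMonoid.addOrderOf_eq_one_iff.1 h)
    omega
  obtain ⟨p, hp⟩ := exists_zmod_addOrderOf_add_eq τ
  obtain ⟨c, hc⟩ := ZMod.exists_coloring_add_one_ne hr
  exact ⟨c ∘ p, fun x => by simpa only [Function.comp_apply, hp] using hc (p x)⟩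

lemma exists_coloring_of_sub_eq [Finite M] {Γ : Type*} [AddCommGroup Γ] {ψ : M →+ Γ}
    (hψ : Function.Injective ψ) {t : Γ} (ht : t ≠ 0) :
    ∃ c : M → Fin 3, ∀ x y, ψ x - ψ y = t → c x ≠ c y := by
  by_cases htψ : ∃ τ, ψ τ = t
  · obtain ⟨τ, rfl⟩ := htψ
    obtain ⟨c, hc⟩ := exists_coloring_add_ne (M := M) (τ := τ) (by rintro rfl; simp at ht)
    refine ⟨c, fun x y hxy => ?_⟩
    rw [← map_sub] at hxy
    rw [show x = y + τ by rw [← hψ hxy]; abel]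
    exact hc y
  · exact ⟨0, fun x y hxy => (htψ ⟨x - y, by rw [map_sub, hxy]⟩).elim⟩

end Coloring

lemma pairwiseDisjoint_sub_pair_of_coloring {M Γ : Type*} [Fintype M] [AddCommGroup Γ]
    [DecidableEq Γ] {ψ : M → Γ} (hψ : Function.Injective ψ) {k k' : Γ} {c : M → Fin 3}
    (hc : ∀ x y, ψ x - ψ y = k - k' → c x ≠ c y) (i : Fin 3) :
    ((Finset.univ.filter (c · = i) : Finset M) : Set M).PairwiseDisjoint
      fun x => ({ψ x - k, ψ x - k'} : Finset Γ) := by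
  intro x hx y hy hxy
  simp only [Finset.coe_filter, Finset.mem_univ, true_and] at hx hy
  rw [Function.onFun, Finset.disjoint_left]
  intro v hvx hvy
  simp only [Finset.mem_insert, Finset.mem_singleton] at hvx hvy
  rcases hvx with rfl | rfl <;> rcases hvy with h | h
  · exact hxy (hψ (by simpa using h))
  · exact hc x y (sub_eq_sub_iff_sub_eq_sub.1 h) (hx.trans hy.symm)
  · exact hc y x (sub_eq_sub_iff_sub_eq_sub.1 h.symm) (hy.trans hx.symm)
  · exact hxy (hψ (by simpa using h))

theorem hasSubgaussianMGF_sum_translate_mul {Ω : Type*} {mΩ : MeasurableSpace Ω}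
    {μ : Measure Ω} {M Γ : Type*} [AddCommGroup M] [Fintype M] [AddCommGroup Γ] [DecidableEq Γ]
    {ε : Γ → Ω → ℝ} (hmeas : ∀ v, Measurable (ε v)) (hindep : iIndepFun ε μ)
    (hbdd : ∀ v, ∀ᵐ ω ∂μ, ε v ω ∈ Set.Icc (-1) 1) (hmean : ∀ v, μ[ε v] = 0)
    {ψ : M →+ Γ} (hψ : Function.Injective ψ) {k k' : Γ} (hk : k ≠ k') :
    HasSubgaussianMGF (fun ω => ∑ x, ε (ψ x - k) ω * ε (ψ x - k') ω)
      (3 * Fintype.card M) μ := by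
  classical
  have := hindep.isProbabilityMeasure
  obtain ⟨c, hc⟩ := exists_coloring_of_sub_eq hψ (sub_ne_zero.2 hk)
  set C : Fin 3 → Finset M := fun i => Finset.univ.filter (c · = i)
  have hclass : ∀ i, HasSubgaussianMGF (fun ω => ∑ x ∈ C i, ε (ψ x - k) ω * ε (ψ x - k') ω)
      (C i).card μ := fun i =>
    hasSubgaussianMGF_sum_mul_of_pairwiseDisjoint hmeas hindep hbdd hmean
      (fun x _ => by simpa using hk) (pairwiseDisjoint_sub_pair_of_coloring hψ hc i)
  have hparam : (∑ i, ((C i).card : ℝ≥0).sqrt) ^ 2 ≤ 3 * Fintype.card M := by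
    calc (∑ i, ((C i).card : ℝ≥0).sqrt) ^ 2
        ≤ (Finset.univ : Finset (Fin 3)).card * ∑ i, ((C i).card : ℝ≥0).sqrt ^ 2 :=
          sq_sum_le_card_mul_sum_sq
      _ = 3 * Fintype.card M := by
          simp only [NNReal.sq_sqrt, Finset.card_univ, Fintype.card_fin, Nat.cast_ofNat, C]
          rw [← Nat.cast_sum, ← Finset.card_eq_sum_card_fiberwise fun x _ => Finset.mem_univ (c x),
            Finset.card_univ]
  refine (HasSubgaussianMGF.finsetSum Finset.univ fun i _ => hclass i).mono hparam |>.congr ?_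
  exact ae_of_all _ fun ω => Finset.sum_fiberwise Finset.univ c _

lemma measure_iUnion_le_card_mul {Ω ι : Type*} {mΩ : MeasurableSpace Ω} {μ : Measure Ω} [Fintype ι]
    {s : ι → Set Ω} {p : ℝ} (h : ∀ i, μ (s i) ≤ ENNReal.ofReal p) :
    μ (⋃ i, s i) ≤ ENNReal.ofReal (Fintype.card ι * p) := by
  calc μ (⋃ i, s i) ≤ ∑ i, μ (s i) := measure_iUnion_fintype_le _ _
    _ ≤ ∑ _i : ι, ENNReal.ofReal p := Finset.sum_le_sum fun i _ => h i
    _ = ENNReal.ofReal (Fintype.card ι * p) := by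
      rw [Finset.sum_const, Finset.card_univ, nsmul_eq_mul, ENNReal.ofReal_mul (by positivity),
        ENNReal.ofReal_natCast]

section Probability

variable {Ω : Type*} {mΩ : MeasurableSpace Ω} {μ : Measure Ω} [IsProbabilityMeasure μ]

section TwoPoint

variable {X : Ω → ℝ} {a : ℝ}

lemma ae_eq_or_eq_neg_of_measure_eq_half (hX : Measurable X) (ha : a ≠ 0)
    (h₁ : μ {ω | X ω = a} = 1 / 2) (h₂ : μ {ω | X ω = -a} = 1 / 2) :
    ∀ᵐ ω ∂μ, X ω = a ∨ X ω = -a := by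
  have hU := hX (measurableSet_singleton a)
  have hV := hX (measurableSet_singleton (-a))
  have hdisj : Disjoint {ω | X ω = a} {ω | X ω = -a} :=
    Set.disjoint_left.2 fun ω (h : X ω = a) (h' : X ω = -a) => ha (by linarith)
  have hfull : μ ({ω | X ω = a} ∪ {ω | X ω = -a}) = 1 := by
    rw [measure_union hdisj hV, h₁, h₂, ENNReal.add_halves]
  exact mem_ae_iff.2 ((prob_compl_eq_zero_iff (hU.union hV)).2 hfull)

lemma ae_sq_eq_of_measure_eq_half (hX : Measurable X) (ha : a ≠ 0)
    (h₁ : μ {ω | X ω = a} = 1 / 2) (h₂ : μ {ω | X ω = -a} = 1 / 2) :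
    ∀ᵐ ω ∂μ, X ω ^ 2 = a ^ 2 := by
  filter_upwards [ae_eq_or_eq_neg_of_measure_eq_half hX ha h₁ h₂] with ω hω
  rcases hω with h | h <;> simp [h]

lemma ae_div_mem_Icc_of_measure_eq_half (hX : Measurable X) (ha : a ≠ 0)
    (h₁ : μ {ω | X ω = a} = 1 / 2) (h₂ : μ {ω | X ω = -a} = 1 / 2) :
    ∀ᵐ ω ∂μ, X ω / a ∈ Set.Icc (-1) 1 := by
  filter_upwards [ae_eq_or_eq_neg_of_measure_eq_half hX ha h₁ h₂] with ω hω
  rcases hω with h | h <;> simp [h, ha]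

lemma integral_eq_zero_of_measure_eq_half (hX : Measurable X) (ha : a ≠ 0)
    (h₁ : μ {ω | X ω = a} = 1 / 2) (h₂ : μ {ω | X ω = -a} = 1 / 2) :
    μ[X] = 0 := by
  set U := {ω | X ω = a}
  set V := {ω | X ω = -a}
  have hU : MeasurableSet U := hX (measurableSet_singleton a)
  have hV : MeasurableSet V := hX (measurableSet_singleton (-a))
  have hX_eq : X =ᵐ[μ] fun ω => U.indicator (fun _ => a) ω + V.indicator (fun _ => -a) ω := by
    filter_upwards [ae_eq_or_eq_neg_of_measure_eq_half hX ha h₁ h₂] with ω hω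
    have hne : a ≠ -a := fun h => ha (by linarith)
    rcases hω with h | h <;> simp [U, V, Set.indicator, h, hne, hne.symm]
  rw [integral_congr_ae hX_eq, integral_add ((integrable_const a).indicator hU)
    ((integrable_const (-a)).indicator hV), integral_indicator_const _ hU,
    integral_indicator_const _ hV, measureReal_def, measureReal_def, h₁, h₂]
  simp

end TwoPoint

lemma ofReal_one_sub_le_of_measure_compl_le {s : Set Ω} {p : ℝ} (hp : 0 ≤ p)
    (h : μ sᶜ ≤ ENNReal.ofReal p) :
    ENNReal.ofReal (1 - p) ≤ μ s := by
  have hcover : 1 ≤ μ s + μ sᶜ := by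
    rw [← measure_univ (μ := μ), ← Set.union_compl_self s]
    exact measure_union_le _ _
  rw [ENNReal.ofReal_sub _ hp, ENNReal.ofReal_one, tsub_le_iff_right]
  exact hcover.trans (add_le_add_right h _)

end Probability

lemma ZMod.natCast_mul_mem_zmultiples {n : ℕ} (i d : ℕ) :
    ((i * d : ℕ) : ZMod n) ∈ AddSubgroup.zmultiples (d : ZMod n) :=
  ⟨i, by simp⟩

lemma ZMod.bijective_natCast_mul_zmultiples {n d : ℕ} [NeZero n] (hd : d ∣ n) :
    Function.Bijective fun i : Fin (n / d) =>
      (⟨((i * d : ℕ) : ZMod n), natCast_mul_mem_zmultiples _ _⟩ :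
        AddSubgroup.zmultiples (d : ZMod n)) := by
  have hd0 : 0 < d := Nat.pos_of_dvd_of_pos hd (NeZero.pos n)
  have hlt : ∀ i : Fin (n / d), (i : ℕ) * d < n := fun i => by
    simpa [Nat.div_mul_cancel hd] using Nat.mul_lt_mul_of_pos_right i.2 hd0
  refine Function.Injective.bijective_of_nat_card_le (fun i j hij => ?_) ?_
  · have := congrArg ZMod.val (congrArg Subtype.val hij)
    simp only [ZMod.val_natCast_of_lt (hlt _)] at this
    exact Fin.ext (Nat.eq_of_mul_eq_mul_right hd0 this)
  · rw [Nat.card_zmultiples, ZMod.addOrderOf_coe _ (NeZero.ne n), Nat.gcd_eq_right hd,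
      Nat.card_eq_fintype_card, Fintype.card_fin]

section CCA

variable {n₁ n₂ d₁ d₂ : ℕ} [NeZero n₁] [NeZero n₂]

-- the sampling lattice `d₁ℤ/n₁ × d₂ℤ/n₂`, the mask amplitude `√(d/n)` and the number `m` of
-- measurements
local notation "Λ" => AddSubgroup.zmultiples (d₁ : ZMod n₁) × AddSubgroup.zmultiples (d₂ : ZMod n₂)
local notation "q" => Real.sqrt ((d₁ * d₂ : ℝ) / (n₁ * n₂ : ℝ))
local notation "m" => (((n₁ / d₁) * (n₂ / d₂) : ℕ) : ℝ)

lemma bijective_ccaRows (hd₁ : d₁ ∣ n₁) (hd₂ : d₂ ∣ n₂) :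
    Function.Bijective fun l : Fin (n₁ / d₁) × Fin (n₂ / d₂) => ((
      ⟨((l.1 * d₁ : ℕ) : ZMod n₁), ZMod.natCast_mul_mem_zmultiples _ _⟩,
      ⟨((l.2 * d₂ : ℕ) : ZMod n₂), ZMod.natCast_mul_mem_zmultiples _ _⟩) : Λ) :=
  (ZMod.bijective_natCast_mul_zmultiples hd₁).prodMap (ZMod.bijective_natCast_mul_zmultiples hd₂)

lemma card_ccaLattice (hd₁ : d₁ ∣ n₁) (hd₂ : d₂ ∣ n₂) : (Fintype.card Λ : ℝ) = m := by
  rw [← Fintype.card_of_bijective (bijective_ccaRows hd₁ hd₂)]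
  simp

lemma ccaMatrix_gram (hd₁ : d₁ ∣ n₁) (hd₂ : d₂ ∣ n₂)
    (h : ZMod n₁ → ZMod n₂ → ℝ) (k k' : ZMod n₁ × ZMod n₂) :
    ((ccaMatrix n₁ n₂ d₁ d₂ h).transpose * ccaMatrix n₁ n₂ d₁ d₂ h) k k' =
      ∑ x : Λ, h (x.1 - k.1) (x.2 - k.2) * h (x.1 - k'.1) (x.2 - k'.2) := by
  simp only [Matrix.mul_apply, Matrix.transpose_apply]
  exact Fintype.sum_bijective _ (bijective_ccaRows hd₁ hd₂) _ _ fun l => rfl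

lemma maskAmplitude_sq_mul_card_rows (hd₁ : d₁ ∣ n₁) (hd₂ : d₂ ∣ n₂) : q ^ 2 * m = 1 := by
  have hne : (n₁ : ℝ) * n₂ ≠ 0 := mul_ne_zero (NeZero.ne _) (NeZero.ne _)
  calc _ = ((d₁ * (n₁ / d₁) : ℕ) : ℝ) * ((d₂ * (n₂ / d₂) : ℕ) : ℝ) / (n₁ * n₂) := by
        rw [Real.sq_sqrt (by positivity)]; push_cast; ring
    _ = 1 := by rw [Nat.mul_div_cancel' hd₁, Nat.mul_div_cancel' hd₂, div_self hne]

lemma maskAmplitude_ne_zero (hd₁ : d₁ ∣ n₁) (hd₂ : d₂ ∣ n₂) : q ≠ 0 := by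
  intro h
  simpa [h] using maskAmplitude_sq_mul_card_rows hd₁ hd₂

lemma ccaMatrix_gram_self (hd₁ : d₁ ∣ n₁) (hd₂ : d₂ ∣ n₂) {h : ZMod n₁ → ZMod n₂ → ℝ}
    (hh : ∀ i j, h i j ^ 2 = q ^ 2) (k : ZMod n₁ × ZMod n₂) :
    ((ccaMatrix n₁ n₂ d₁ d₂ h).transpose * ccaMatrix n₁ n₂ d₁ d₂ h) k k = 1 := by
  simp only [Matrix.mul_apply, Matrix.transpose_apply, ← sq, ccaMatrix, hh, Finset.sum_const,
    Finset.card_univ, Fintype.card_prod, Fintype.card_fin, nsmul_eq_mul]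
  rw [mul_comm]
  exact maskAmplitude_sq_mul_card_rows hd₁ hd₂

variable {Ω : Type*} {mΩ : MeasurableSpace Ω} {μ : Measure Ω} {H : Ω → ZMod n₁ → ZMod n₂ → ℝ}

lemma measure_lt_abs_ccaMatrix_gram_le (hd₁ : d₁ ∣ n₁) (hd₂ : d₂ ∣ n₂)
    (s : ℕ) {δ : ℝ} (hδ : 0 ≤ δ) (hHmeas : ∀ i j, Measurable fun ω => H ω i j)
    (hHindep : iIndepFun (fun (ij : ZMod n₁ × ZMod n₂) ω => H ω ij.1 ij.2) μ)
    (hHdist : ∀ i j, μ {ω | H ω i j = q} = 1/2 ∧ μ {ω | H ω i j = -q} = 1/2)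
    {k k' : ZMod n₁ × ZMod n₂} (hk : k ≠ k') :
    μ {ω | δ / s < |((ccaMatrix n₁ n₂ d₁ d₂ (H ω)).transpose * ccaMatrix n₁ n₂ d₁ d₂ (H ω)) k k'|}
      ≤ ENNReal.ofReal (2 * Real.exp (-(δ ^ 2 / 6) * m / (s : ℝ) ^ 2)) := by
  have := hHindep.isProbabilityMeasure
  have hqm := maskAmplitude_sq_mul_card_rows hd₁ hd₂
  have hq := maskAmplitude_ne_zero hd₁ hd₂
  set ε : ZMod n₁ × ZMod n₂ → Ω → ℝ := fun v ω => H ω v.1 v.2 / q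
  have hεbdd : ∀ v, ∀ᵐ ω ∂μ, ε v ω ∈ Set.Icc (-1) 1 := fun v =>
    ae_div_mem_Icc_of_measure_eq_half (hHmeas v.1 v.2) hq (hHdist v.1 v.2).1 (hHdist v.1 v.2).2
  have hεmean : ∀ v, μ[ε v] = 0 := fun v => by
    rw [integral_div, integral_eq_zero_of_measure_eq_half (hHmeas v.1 v.2) hq (hHdist v.1 v.2).1
      (hHdist v.1 v.2).2, zero_div]
  set ψ := (AddSubgroup.zmultiples (d₁ : ZMod n₁)).subtype.prodMap
    (AddSubgroup.zmultiples (d₂ : ZMod n₂)).subtype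
  set S := fun ω => ∑ x, ε (ψ x - k) ω * ε (ψ x - k') ω
  have hgram : ∀ ω, ((ccaMatrix n₁ n₂ d₁ d₂ (H ω)).transpose * ccaMatrix n₁ n₂ d₁ d₂ (H ω)) k k'
      = q ^ 2 * S ω := fun ω => by
    rw [ccaMatrix_gram hd₁ hd₂, Finset.mul_sum]
    exact Finset.sum_congr rfl fun x _ => by simp only [ε]; field_simp; rfl
  have hexp : -(δ * m / s) ^ 2 / (2 * (3 * m)) = -(δ ^ 2 / 6) * m / (s : ℝ) ^ 2 := by
    have hm : m ≠ 0 := by rintro hm; simp [hm] at hqm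
    rcases eq_or_ne (s : ℝ) 0 with hs | hs
    · simp [hs]
    · field_simp
      ring
  have htail := (hasSubgaussianMGF_sum_translate_mul (fun v => (hHmeas v.1 v.2).div_const q)
    (hHindep.comp _ fun _ => measurable_id.div_const q) hεbdd hεmean
    (ψ := ψ) (Subtype.val_injective.prodMap Subtype.val_injective) hk).measure_abs_ge_le
    (ε := δ * m / s) (by positivity)
  simp only [NNReal.coe_mul, NNReal.coe_ofNat, NNReal.coe_natCast, card_ccaLattice hd₁ hd₂,
    hexp] at htail
  refine (measure_mono fun ω (hω : δ / s < _) => ?_).trans htail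
  rw [hgram, abs_mul, abs_of_nonneg (sq_nonneg q)] at hω
  refine (lt_of_mul_lt_mul_left ?_ (sq_nonneg q)).le
  calc q ^ 2 * (δ * m / s) = δ / s := by linear_combination (δ / s) * hqm
    _ < q ^ 2 * |S ω| := hω

theorem ofReal_le_measure_isRIP_ccaMatrix (hd₁ : d₁ ∣ n₁) (hd₂ : d₂ ∣ n₂)
    (s : ℕ) {δ : ℝ} (hδ : 0 ≤ δ) (hHmeas : ∀ i j, Measurable fun ω => H ω i j)
    (hHindep : iIndepFun (fun (ij : ZMod n₁ × ZMod n₂) ω => H ω ij.1 ij.2) μ)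
    (hHdist : ∀ i j, μ {ω | H ω i j = q} = 1/2 ∧ μ {ω | H ω i j = -q} = 1/2) :
    ENNReal.ofReal (1 - 2 * ((n₁ : ℝ) * n₂) ^ 2 * Real.exp (-(δ ^ 2 / 6) * m / (s : ℝ) ^ 2))
      ≤ μ {ω | IsRIP (ccaMatrix n₁ n₂ d₁ d₂ (H ω)) s δ} := by
  classical
  have := hHindep.isProbabilityMeasure
  set G := fun ω => (ccaMatrix n₁ n₂ d₁ d₂ (H ω)).transpose * ccaMatrix n₁ n₂ d₁ d₂ (H ω)
  have hsq : ∀ᵐ ω ∂μ, ∀ i j, H ω i j ^ 2 = q ^ 2 :=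
    ae_all_iff.2 fun i => ae_all_iff.2 fun j => ae_sq_eq_of_measure_eq_half (hHmeas i j)
      (maskAmplitude_ne_zero hd₁ hd₂) (hHdist i j).1 (hHdist i j).2
  have hbad : {ω | IsRIP (ccaMatrix n₁ n₂ d₁ d₂ (H ω)) s δ}ᶜ ≤ᵐ[μ]
      ⋃ kk : (ZMod n₁ × ZMod n₂) × (ZMod n₁ × ZMod n₂),
        {ω | kk.1 ≠ kk.2 ∧ δ / s < |G ω kk.1 kk.2|} := by
    filter_upwards [hsq] with ω hω hnot
    refine Set.mem_iUnion.2 (not_forall_not.1 fun hgood => hnot ?_)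
    exact isRIP_of_gram _ s hδ (ccaMatrix_gram_self hd₁ hd₂ hω)
      fun k k' hk => not_lt.1 fun h => hgood (k, k') ⟨hk, h⟩
  have hcard : (Fintype.card ((ZMod n₁ × ZMod n₂) × (ZMod n₁ × ZMod n₂)) : ℝ)
      = ((n₁ : ℝ) * n₂) ^ 2 := by
    simp only [Fintype.card_prod, ZMod.card]
    push_cast
    ring
  refine ofReal_one_sub_le_of_measure_compl_le (by positivity) ((measure_mono_ae hbad).trans
    ((measure_iUnion_le_card_mul (p := 2 * Real.exp (-(δ ^ 2 / 6) * m / (s : ℝ) ^ 2))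
      fun kk => ?_).trans_eq (by rw [hcard]; ring_nf)))
  by_cases hkk : kk.1 = kk.2
  · simp [hkk]
  · exact (measure_mono fun ω hω => hω.2).trans
      (measure_lt_abs_ccaMatrix_gram_le hd₁ hd₂ s hδ hHmeas hHindep hHdist hkk)

end CCA

/-- Spatial-domain CCA sensing satisfies the RIP with high probability.
There are constants `c₁ c₂ > 0` (depending only on `δs`) such that, whenever the mask
entries are i.i.d. `±√(d/n)` Rademacher variables and `m ≥ c₁ s² log n`, the CCA matrix
is `RIP(s, δs)` with probability at least `1 - 2 n² exp(-c₂ m / s²)`. -/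
theorem cca_RIP (δs : ℝ) (hδs : δs ∈ Set.Ioo (0 : ℝ) 1) :
    ∃ c₁ c₂ : ℝ, 0 < c₁ ∧ 0 < c₂ ∧
      ∀ (n₁ n₂ d₁ d₂ : ℕ) [NeZero n₁] [NeZero n₂],
        d₁ ∣ n₁ → d₂ ∣ n₂ → 0 < d₁ → 0 < d₂ →
        ∀ (s : ℕ), 1 ≤ s →
        ∀ (Ω : Type) (mΩ : MeasurableSpace Ω) (μ : Measure Ω), IsProbabilityMeasure μ →
        ∀ (H : Ω → ZMod n₁ → ZMod n₂ → ℝ),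
          (∀ i j, Measurable fun ω => H ω i j) →
          -- the mask entries are independent
          iIndepFun
            (fun (ij : ZMod n₁ × ZMod n₂) ω => H ω ij.1 ij.2) μ →
          -- each entry is a scaled Rademacher variable, `±√(d/n)` with probability 1/2 each
          (∀ i j,
            μ {ω | H ω i j = Real.sqrt ((d₁ * d₂ : ℝ) / (n₁ * n₂ : ℝ))} = 1/2 ∧
            μ {ω | H ω i j = -Real.sqrt ((d₁ * d₂ : ℝ) / (n₁ * n₂ : ℝ))} = 1/2) →
          -- m ≥ c₁ s² log n
          c₁ * (s : ℝ) ^ 2 * Real.log ((n₁ : ℝ) * n₂)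
              ≤ ((n₁ / d₁) * (n₂ / d₂) : ℕ) →
          ENNReal.ofReal
              (1 - 2 * ((n₁ : ℝ) * n₂) ^ 2 *
                Real.exp (-c₂ * ((n₁ / d₁) * (n₂ / d₂) : ℕ) / (s : ℝ) ^ 2))
            ≤ μ {ω | IsRIP (ccaMatrix n₁ n₂ d₁ d₂ (H ω)) s δs} := by
  refine ⟨1, δs ^ 2 / 6, one_pos, div_pos (pow_pos hδs.1 2) (by norm_num), ?_⟩
  intro n₁ n₂ d₁ d₂ _ _ hd₁ hd₂ _ _ s _ Ω _ μ _ H hHmeas hHindep hHdist _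
  exact ofReal_le_measure_isRIP_ccaMatrix hd₁ hd₂ s hδs.1.le hHmeas hHindep hHdist
end
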